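/- arXiv:2008.04247 — 3 statements merged into one kernel-verified Lean document; each statement's English description precedes it below -/
import Mathlib

section
/- Any perfect matching P of {1,…,n} containing the pair {i,j} decomposes as {i,j} ⊔ P' where P' is a perfect matching of {1,…,n}∖{i,j}, and sign(P) = (-1)^{i+j+1}·sign(P'). -/
/-
Deleting a point `a` from the domain and its image `τ a` from the codomain of a permutation `τ`
of `Fin (n + 1)`, relabelling both sides through `Fin.succAbove`, multiplies the sign by
`(-1) ^ (a + τ a)`: composing with the cycles `Fin.cycleRange` that move `a` and `τ a` to `0`
gives a permutation fixing `0`. Deleting the slots `2k, 2k + 1` of the pair `{i, j}` in this way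
from the permutation encoding the matching yields the permutation encoding the remaining
matching, with sign factor `(-1) ^ (2k + (2k + 1) + i + j) = (-1) ^ (i + j + 1)`; it is again a
canonical encoding because the relabellings are monotone.
-/

open Matrix Polynomial

namespace PaperPf

variable {R : Type*} [CommRing R]

/-- Position `2i`, the slot of the first element of the `i`-th pair. -/
def lo {m : ℕ} (i : Fin m) : Fin (2 * m) := ⟨2 * i.val, by have := i.isLt; omega⟩

/-- Position `2i+1`, the slot of the second element of the `i`-th pair. -/
def hi {m : ℕ} (i : Fin m) : Fin (2 * m) := ⟨2 * i.val + 1, by have := i.isLt; omega⟩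

/-- Permutations of `Fin (2m)` canonically encoding perfect matchings of
`{0,…,2m-1}`: the pairs are `{σ(2i), σ(2i+1)}`, each pair is listed with its
smaller element first, and pairs occur in increasing order of first elements.
The sign of the matching is the sign of this permutation. -/
def matchings (m : ℕ) : Finset (Equiv.Perm (Fin (2 * m))) :=
  Finset.univ.filter fun σ =>
    (∀ i : Fin m, σ (lo i) < σ (hi i)) ∧
    (∀ i j : Fin m, i < j → σ (lo i) < σ (lo j))

/-- The Pfaffian of a `2m × 2m` matrix, defined as the signed sum over all
perfect matchings of the products of the corresponding entries. -/
def pf {m : ℕ} (A : Matrix (Fin (2 * m)) (Fin (2 * m)) R) : R :=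
  ∑ σ ∈ matchings m,
    (Equiv.Perm.sign σ : ℤ) • ∏ i : Fin m, A (σ (lo i)) (σ (hi i))

end PaperPf

namespace PaperPf

variable {R : Type*} [CommRing R]

lemma card_compl_pair {m : ℕ} {i j : Fin (2 * (m + 1))} (h : ¬ i = j) :
    (({i, j}ᶜ : Finset (Fin (2 * (m + 1)))).card = 2 * m) := by
  rw [Finset.card_compl, Finset.card_insert_of_notMem (by simpa using h),
    Finset.card_singleton]
  simp only [Fintype.card_fin]
  omega

/-- The increasing enumeration of `{0,…,2(m+1)-1} \ {i,j}`. -/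
def delEmb {m : ℕ} (i j : Fin (2 * (m + 1))) (h : i ≠ j) :
    Fin (2 * m) → Fin (2 * (m + 1)) :=
  fun k => (({i, j}ᶜ : Finset (Fin (2 * (m + 1)))).orderIsoOfFin
    (card_compl_pair h) k : Fin (2 * (m + 1)))

/-- `A⟨i,j⟩`: the matrix obtained from `A` by deleting the `i`-th and `j`-th
rows and columns (junk value `0` if `i = j`). -/
def minor {m : ℕ} (A : Matrix (Fin (2 * (m + 1))) (Fin (2 * (m + 1))) R)
    (i j : Fin (2 * (m + 1))) : Matrix (Fin (2 * m)) (Fin (2 * m)) R :=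
  if h : i = j then 0
  else A.submatrix (delEmb i j h) (delEmb i j h)

/-- The Pfaff-adjugate matrix of `A`. -/
def Padj {m : ℕ} (A : Matrix (Fin (2 * (m + 1))) (Fin (2 * (m + 1))) R) :
    Matrix (Fin (2 * (m + 1))) (Fin (2 * (m + 1))) R :=
  fun i j =>
    if i = j then 0
    else if i < j then (-1 : R) ^ (i.val + j.val) * pf (minor A i j)
    else (-1 : R) ^ (i.val + j.val + 1) * pf (minor A i j)

end PaperPf

theorem Fin.val_succAbove {n : ℕ} (p : Fin (n + 1)) (x : Fin n) :
    (p.succAbove x).val = if x.val < p.val then x.val else x.val + 1 := by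
  rcases lt_or_ge x.val p.val with h | h
  · rw [Fin.succAbove_of_castSucc_lt _ _ h, if_pos h, Fin.val_castSucc]
  · rw [Fin.succAbove_of_le_castSucc _ _ h, if_neg (not_lt.mpr h), Fin.val_succ]

namespace Equiv.Perm

variable {n : ℕ}

def eraseFin (τ : Perm (Fin (n + 1))) (a : Fin (n + 1)) : Perm (Fin n) :=
  (finSuccAboveEquiv a).trans <|
    (τ.subtypeEquiv (p := (· ≠ a)) (q := (· ≠ τ a)) fun _ => τ.injective.ne_iff.symm).trans
      (finSuccAboveEquiv (τ a)).symm

theorem succAbove_eraseFin_apply (τ : Perm (Fin (n + 1))) (a : Fin (n + 1)) (x : Fin n) :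
    (τ a).succAbove (τ.eraseFin a x) = τ (a.succAbove x) :=
  congrArg Subtype.val <| (finSuccAboveEquiv (τ a)).apply_symm_apply
    ⟨τ (a.succAbove x), τ.injective.ne (a.succAbove_ne x)⟩

theorem sign_eq_pow_mul_sign_eraseFin (τ : Perm (Fin (n + 1))) (a : Fin (n + 1)) :
    sign τ = (-1) ^ (a.val + (τ a).val) * sign (τ.eraseFin a) := by
  have hρ : (τ a).cycleRange * τ * a.cycleRange⁻¹ = decomposeFin.symm (0, τ.eraseFin a) := by
    ext x
    induction x using Fin.cases with
    | zero => simp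
    | succ y =>
      rw [Perm.mul_apply, Perm.mul_apply, Perm.inv_def, Fin.cycleRange_symm_succ,
        ← succAbove_eraseFin_apply, Fin.cycleRange_succAbove, decomposeFin_symm_apply_succ,
        swap_self, refl_apply]
  have hsign := congrArg sign hρ
  simp only [map_mul, map_inv, Fin.sign_cycleRange, decomposeFin.symm_sign, if_true, one_mul]
    at hsign
  rw [← hsign, Int.units_inv_eq_self, pow_add]
  calc sign τ = (-1) ^ a.val * (-1) ^ a.val * ((-1) ^ (τ a).val * (-1) ^ (τ a).val) * sign τ := by
        rw [Int.units_mul_self, Int.units_mul_self, one_mul, one_mul]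
    _ = _ := by ac_rfl

end Equiv.Perm

namespace PaperPf

open Equiv Equiv.Perm

variable {m : ℕ}

theorem val_lo (k : Fin m) : (lo k).val = 2 * k.val := rfl

theorem val_hi (k : Fin m) : (hi k).val = 2 * k.val + 1 := rfl

theorem lo_lt_hi (k : Fin m) : lo k < hi k := Fin.lt_def.mpr (Nat.lt_succ_self _)

theorem delEmb_strictMono {i j : Fin (2 * (m + 1))} (h : i ≠ j) : StrictMono (delEmb i j h) :=
  fun _ _ hab => (({i, j}ᶜ : Finset _).orderIsoOfFin (card_compl_pair h)).strictMono hab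

theorem delEmb_eq_succAbove {i j : Fin (2 * (m + 1))} (hij : i < j) (t : Fin (2 * m)) :
    delEmb i j hij.ne t =
      Fin.succAbove (n := 2 * m + 1) j ((i.castPred (Fin.ne_last_of_lt hij)).succAbove t) := by
  set c : Fin (2 * m + 1) := i.castPred (Fin.ne_last_of_lt hij)
  have hc : j.succAbove c = i := Fin.succAbove_castPred_of_lt _ _ hij
  have hmem : ∀ t, j.succAbove (c.succAbove t) ∈ ({i, j}ᶜ : Finset (Fin (2 * (m + 1)))) := by
    intro t
    simp only [Finset.mem_compl, Finset.mem_insert, Finset.mem_singleton, not_or]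
    refine ⟨fun h => c.succAbove_ne t ?_, j.succAbove_ne _⟩
    exact j.succAbove_right_injective (h.trans hc.symm)
  have hmono := (Fin.strictMono_succAbove j).comp (Fin.strictMono_succAbove c)
  rw [delEmb, Finset.coe_orderIsoOfFin_apply,
    ← Finset.orderEmbOfFin_unique (card_compl_pair hij.ne) hmem hmono]

theorem delEmb_lo (k : Fin (m + 1)) (l : Fin m) :
    delEmb (lo k) (hi k) (lo_lt_hi k).ne (lo l) = lo (k.succAbove l) := by
  rw [delEmb_eq_succAbove (lo_lt_hi k)]
  refine Fin.ext ?_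
  rw [val_lo (k.succAbove l), Fin.val_succAbove k, Fin.val_succAbove, Fin.val_succAbove,
    Fin.coe_castPred, val_lo l, val_lo k, val_hi k]
  split_ifs <;> omega

theorem delEmb_hi (k : Fin (m + 1)) (l : Fin m) :
    delEmb (lo k) (hi k) (lo_lt_hi k).ne (hi l) = hi (k.succAbove l) := by
  rw [delEmb_eq_succAbove (lo_lt_hi k)]
  refine Fin.ext ?_
  rw [val_hi (k.succAbove l), Fin.val_succAbove k, Fin.val_succAbove, Fin.val_succAbove,
    Fin.coe_castPred, val_hi l, val_lo k, val_hi k]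
  split_ifs <;> omega

theorem exists_perm_delEmb {σ : Perm (Fin (2 * (m + 1)))} {a b : Fin (2 * (m + 1))} (hab : a < b)
    (hσ : σ a < σ b) :
    ∃ σ' : Perm (Fin (2 * m)),
      (∀ t, delEmb (σ a) (σ b) hσ.ne (σ' t) = σ (delEmb a b hab.ne t)) ∧
      sign σ = (-1) ^ (a.val + b.val + (σ a).val + (σ b).val) * sign σ' := by
  set a' := a.castPred (Fin.ne_last_of_lt hab)
  set σ₁ := σ.eraseFin b
  have hσ₁ : σ₁ a' = (σ a).castPred (Fin.ne_last_of_lt hσ) :=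
    (σ b).succAbove_right_injective <| by
      rw [succAbove_eraseFin_apply, Fin.succAbove_castPred_of_lt _ _ hab,
        Fin.succAbove_castPred_of_lt _ _ hσ]
  refine ⟨σ₁.eraseFin a', fun t => ?_, ?_⟩
  · rw [delEmb_eq_succAbove hσ, delEmb_eq_succAbove hab, ← hσ₁, succAbove_eraseFin_apply,
      succAbove_eraseFin_apply]
  · rw [sign_eq_pow_mul_sign_eraseFin σ b, sign_eq_pow_mul_sign_eraseFin σ₁ a', hσ₁]
    -- restate the exponents in `Fin (2 * (m + 1))`; `eraseFin` produced them in `Fin (2 * m + 1 + 1)`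
    show (-1) ^ (b.val + (σ b).val) * ((-1) ^ (a.val + (σ a).val) * _) = _
    rw [← mul_assoc, ← pow_add]
    ac_rfl

end PaperPf

open PaperPf

/-- Any perfect matching `P` of `{0,…,2(m+1)-1}` containing the
pair `{i,j}` (with `i < j`) decomposes as `{i,j} ⊔ P'` where `P'` is a perfect
matching of the complement of `{i,j}`, and `sign(P) = (-1)^{i+j+1}·sign(P')`.
Matchings are encoded by their canonical permutations; the matching `P'` of
the complement is encoded by a matching `σ'` of `Fin (2m)` transported by the
increasing enumeration `delEmb i j` of the complement of `{i,j}`. -/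
theorem matching_erase_pair {m : ℕ}
    (i j : Fin (2 * (m + 1))) (hij : i < j)
    (σ : Equiv.Perm (Fin (2 * (m + 1)))) (hσ : σ ∈ matchings (m + 1))
    (k : Fin (m + 1)) (hk : σ (lo k) = i ∧ σ (hi k) = j) :
    ∃ σ' ∈ matchings m,
      ((Finset.univ.erase k).image
          (fun l : Fin (m + 1) => ({σ (lo l), σ (hi l)} : Finset (Fin (2 * (m + 1)))))
        = Finset.univ.image
          (fun l : Fin m =>
            ({delEmb i j hij.ne (σ' (lo l)), delEmb i j hij.ne (σ' (hi l))} :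
              Finset (Fin (2 * (m + 1)))))) ∧
      (Equiv.Perm.sign σ : ℤ) = (-1) ^ (i.val + j.val + 1) * (Equiv.Perm.sign σ' : ℤ) := by
  obtain ⟨-, hlohi, hlo⟩ := Finset.mem_filter.mp hσ
  obtain ⟨rfl, rfl⟩ := hk
  obtain ⟨σ', hσ', hsign⟩ := exists_perm_delEmb (lo_lt_hi k) hij
  have hpair : ∀ l : Fin m,
      delEmb _ _ hij.ne (σ' (lo l)) = σ (lo (k.succAbove l)) ∧
        delEmb _ _ hij.ne (σ' (hi l)) = σ (hi (k.succAbove l)) :=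
    fun l => ⟨by rw [hσ', delEmb_lo], by rw [hσ', delEmb_hi]⟩
  have hlt : ∀ a b, delEmb _ _ hij.ne a < delEmb _ _ hij.ne b ↔ a < b :=
    fun _ _ => (delEmb_strictMono hij.ne).lt_iff_lt
  refine ⟨σ', ?_, ?_, ?_⟩
  · refine Finset.mem_filter.mpr ⟨Finset.mem_univ _, fun l => ?_, fun l l' hll' => ?_⟩
    · rw [← hlt, (hpair l).1, (hpair l).2]
      exact hlohi _
    · rw [← hlt, (hpair l).1, (hpair l').1]
      exact hlo _ _ (Fin.succAbove_lt_succAbove_iff.mpr hll')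
  · ext S
    simp only [Finset.mem_image, Finset.mem_erase, Finset.mem_univ, true_and, and_true, hpair]
    constructor
    · rintro ⟨l, hlk, rfl⟩
      obtain ⟨l', rfl⟩ := Fin.exists_succAbove_eq hlk
      exact ⟨l', rfl⟩
    · rintro ⟨l, rfl⟩
      exact ⟨k.succAbove l, Fin.succAbove_ne k l, rfl⟩
  · have hexp : ∀ a b c : ℕ, 2 * a + (2 * a + 1) + b + c = b + c + 1 + 2 * (2 * a) :=
      fun _ _ _ => by ring
    rw [hsign, val_lo, val_hi, hexp, pow_add, pow_mul, Int.units_sq, one_pow, mul_one]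
    norm_cast
end

section
/- Correctness of the Faddeev-LeVerrier recursion: over a commutative ℚ-algebra, define N₁ = I and N_{k+1} = A·N_k − (1/k)·tr(A·N_k)·I for k = 1,…,n. Then for every k, c_k := −(1/k)·tr(A·N_k) is the coefficient of t^{n−k} in the characteristic polynomial det(tI − A); in particular (−1)ⁿ·c_n = det(A). -/
open Matrix Polynomial

namespace PaperPf

variable {R : Type*} [CommRing R] [Algebra ℚ R]

/-- The Faddeev–LeVerrier matrices: `FLN A k = N_{k+1}`, where `N₁ = I` and
`N_{k+1} = A·N_k − (1/k)·tr(A·N_k)·I`. -/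
def FLN {n : ℕ} (A : Matrix (Fin n) (Fin n) R) : ℕ → Matrix (Fin n) (Fin n) R
  | 0 => 1
  | k + 1 => A * FLN A k - ((((k + 1 : ℕ) : ℚ))⁻¹ • (A * FLN A k).trace) • 1

end PaperPf

open Matrix Polynomial

section Aux
variable {R : Type*} [CommRing R] {m : Type*} [Fintype m] [DecidableEq m]

omit [Fintype m] in
lemma FL_derivative_finset_prod (s : Finset m) (f : m → R[X]) :
    derivative (∏ i ∈ s, f i) = ∑ i ∈ s, (∏ j ∈ s.erase i, f j) * derivative (f i) := by
  rw [Finset.prod, Polynomial.derivative_prod, Finset.sum]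
  congr 1

lemma FL_derivative_det (M : Matrix m m R[X]) :
    derivative M.det = ∑ i, (M.updateRow i (fun j => derivative (M i j))).det := by
  simp_rw [det_apply']
  rw [map_sum, Finset.sum_comm]
  refine Finset.sum_congr rfl fun σ _ => ?_
  rw [derivative_mul, derivative_intCast, zero_mul, zero_add, FL_derivative_finset_prod,
    Finset.mul_sum]
  rw [← Equiv.sum_comp σ (fun i => (Equiv.Perm.sign σ : R[X]) * ∏ j,
    (M.updateRow i fun j => derivative (M i j)) (σ j) j)]
  refine Finset.sum_congr rfl fun j _ => ?_
  congr 1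
  rw [← Finset.mul_prod_erase Finset.univ _ (Finset.mem_univ j), mul_comm]
  congr 1
  · rw [updateRow_self]
  · refine Finset.prod_congr rfl fun a ha => ?_
    rw [updateRow_ne]
    exact fun h => (Finset.mem_erase.mp ha).1 (σ.injective h)

lemma FL_trace_adjugate_charmatrix (A : Matrix m m R) :
    (adjugate (charmatrix A)).trace = derivative A.charpoly := by
  rw [Matrix.charpoly, FL_derivative_det, Matrix.trace]
  refine Finset.sum_congr rfl fun i _ => ?_
  rw [diag_apply, adjugate_apply]
  have : (fun j => derivative (A.charmatrix i j)) = Pi.single i 1 := by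
    funext j
    rcases eq_or_ne i j with rfl | h
    · rw [charmatrix_apply_eq, Pi.single_eq_same]
      simp
    · rw [charmatrix_apply_ne _ _ _ h, Pi.single_eq_of_ne (Ne.symm h)]
      simp
  rw [this]
end Aux

open PaperPf

/-- Correctness of the Faddeev–LeVerrier recursion: with
`N₁ = I` and `N_{k+1} = A·N_k − (1/k)·tr(A·N_k)·I` (so `N_k = FLN A (k-1)`),
for every `k = 1,…,n` the quantity `c_k = −(1/k)·tr(A·N_k)` is the coefficient
of `t^{n−k}` in the characteristic polynomial `det(tI − A)`; in particular
`(−1)ⁿ·c_n = det(A)`. -/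
theorem faddeev_leverrier_coeff {R : Type*} [CommRing R] [Algebra ℚ R]
    {n : ℕ} (hn : 0 < n) (A : Matrix (Fin n) (Fin n) R) :
    (∀ k, 1 ≤ k → k ≤ n →
      -((k : ℚ)⁻¹ • (A * FLN A (k - 1)).trace) = A.charpoly.coeff (n - k)) ∧
    (-1 : R) ^ n * -((n : ℚ)⁻¹ • (A * FLN A (n - 1)).trace) = A.det := by
  rcases subsingleton_or_nontrivial R with hR | hR
  · exact ⟨fun k _ _ => Subsingleton.elim _ _, Subsingleton.elim _ _⟩
  set p := A.charpoly with hp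
  set b := matPolyEquiv (adjugate (charmatrix A)) with hb
  have hdeg : p.natDegree = n := by
    rw [hp, Matrix.charpoly_natDegree_eq_dim, Fintype.card_fin]
  have hmul : (X - C A) * b = p.map (algebraMap R (Matrix (Fin n) (Fin n) R)) := by
    have h := Matrix.mul_adjugate (charmatrix A)
    have h2 := congrArg matPolyEquiv h
    rwa [_root_.map_mul, matPolyEquiv_charmatrix, matPolyEquiv_smul_one] at h2
  have hrecS : ∀ j, b.coeff j - A * b.coeff (j + 1) = p.coeff (j + 1) • 1 := by
    intro j
    have h := congrArg (fun q => Polynomial.coeff q (j + 1)) hmul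
    simp only [sub_mul, coeff_sub, coeff_X_mul, coeff_C_mul, coeff_map] at h
    rwa [Algebra.algebraMap_eq_smul_one] at h
  have hrec0 : -(A * b.coeff 0) = p.coeff 0 • 1 := by
    have h := congrArg (fun q => Polynomial.coeff q 0) hmul
    simp only [sub_mul, coeff_sub, mul_coeff_zero, coeff_X_zero, zero_mul, coeff_C_mul,
      coeff_map, zero_sub, coeff_C_zero] at h
    rwa [Algebra.algebraMap_eq_smul_one] at h
  have htr : ∀ j, (b.coeff j).trace = p.coeff (j + 1) * ((j : R) + 1) := by
    intro j
    have h1 : (b.coeff j).trace = ((adjugate (charmatrix A)).trace).coeff j := by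
      rw [Matrix.trace, Matrix.trace, finset_sum_coeff]
      refine Finset.sum_congr rfl fun i _ => ?_
      rw [diag_apply, diag_apply, hb, matPolyEquiv_coeff_apply]
    rw [h1, FL_trace_adjugate_charmatrix, coeff_derivative]
  have hstep : ∀ j, n ≤ j → b.coeff j = A * b.coeff (j + 1) := by
    intro j hj
    have hz : p.coeff (j + 1) = 0 :=
      coeff_eq_zero_of_natDegree_lt (by rw [hdeg]; omega)
    have h := hrecS j
    rw [hz, zero_smul, sub_eq_zero] at h
    exact h
  have hvan : ∀ j, n ≤ j → b.coeff j = 0 := by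
    intro j hj
    have key : ∀ i, b.coeff j = A ^ i * b.coeff (j + i) := by
      intro i
      induction i with
      | zero => simp
      | succ i ih =>
        rw [ih, hstep (j + i) (by omega), ← mul_assoc, ← pow_succ, ← add_assoc]
    rw [key (b.natDegree + 1), coeff_eq_zero_of_natDegree_lt (by omega), mul_zero]
  have hbase : b.coeff (n - 1) = 1 := by
    have h := hrecS (n - 1)
    rw [show n - 1 + 1 = n by omega, hvan n le_rfl, mul_zero, sub_zero] at h
    have hc : p.coeff n = 1 := by
      have := (Matrix.charpoly_monic A).coeff_natDegree
      rwa [hdeg] at this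
    rw [h, hc, one_smul]
  have htrk : ∀ k, 1 ≤ k → k ≤ n →
      (A * b.coeff (n - k)).trace = -((k : R) * p.coeff (n - k)) := by
    intro k hk1 hkn
    rcases eq_or_lt_of_le hkn with rfl | hlt
    · rw [Nat.sub_self]
      have h : A * b.coeff 0 = -(p.coeff 0 • 1) := by rw [← hrec0, neg_neg]
      rw [h, trace_neg, trace_smul, trace_one, Fintype.card_fin, smul_eq_mul, mul_comm]
    · have hm : n - k - 1 + 1 = n - k := by omega
      have h := hrecS (n - k - 1)
      rw [hm] at h
      have h2 : A * b.coeff (n - k) = b.coeff (n - k - 1) - p.coeff (n - k) • 1 := by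
        rw [← h]; abel
      rw [h2, trace_sub, trace_smul, trace_one, Fintype.card_fin, smul_eq_mul, htr, hm]
      have hcast : ((n - k - 1 : ℕ) : R) + 1 = (n : R) - (k : R) := by
        have h4 : ((n - k - 1 : ℕ) + 1 : ℕ) = n - k := by omega
        calc ((n - k - 1 : ℕ) : R) + 1 = (((n - k - 1 : ℕ) + 1 : ℕ) : R) := by push_cast; ring
          _ = ((n - k : ℕ) : R) := by rw [h4]
          _ = (n : R) - (k : R) := by rw [Nat.cast_sub hkn]
      rw [hcast]
      ring
  have hq : ∀ (k : ℕ), 1 ≤ k → ∀ c : R, (k : ℚ)⁻¹ • (-((k : R) * c)) = -c := by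
    intro k hk c
    have hk0 : (k : ℚ) ≠ 0 := Nat.cast_ne_zero.mpr (by omega)
    rw [smul_neg]
    congr 1
    have hc : ((k : R) * c) = (k : ℚ) • c := by
      rw [← nsmul_eq_mul, ← Nat.cast_smul_eq_nsmul ℚ]
    rw [hc, smul_smul, inv_mul_cancel₀ hk0, one_smul]
  have key : ∀ k, 1 ≤ k → k ≤ n → FLN A (k - 1) = b.coeff (n - k) := by
    intro k
    induction k with
    | zero => intro hk1 _; exact absurd hk1 (by omega)
    | succ k ih =>
      intro hk1 hkn
      rcases Nat.eq_zero_or_pos k with rfl | hk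
      · simpa [FLN] using hbase.symm
      · have ihk := ih hk (by omega)
        have hk1' : k - 1 + 1 = k := by omega
        have hFLN : FLN A k =
            A * FLN A (k - 1) - (((k : ℕ) : ℚ)⁻¹ • (A * FLN A (k - 1)).trace) • 1 := by
          conv_lhs => rw [← hk1']
          simp only [FLN]
          rw [hk1']
        rw [Nat.add_sub_cancel, hFLN, ihk, htrk k hk (by omega), hq k hk, neg_smul,
          sub_neg_eq_add]
        have hm : n - k - 1 + 1 = n - k := by omega
        have h := hrecS (n - k - 1)
        rw [hm] at h
        rw [show n - (k + 1) = n - k - 1 by omega, ← h]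
        abel
  have main : ∀ k, 1 ≤ k → k ≤ n →
      -((k : ℚ)⁻¹ • (A * FLN A (k - 1)).trace) = p.coeff (n - k) := by
    intro k hk1 hkn
    rw [key k hk1 hkn, htrk k hk1 hkn, hq k hk1, neg_neg]
  refine ⟨main, ?_⟩
  rw [main n (by omega) le_rfl, Nat.sub_self, Matrix.det_eq_sign_charpoly_coeff,
    Fintype.card_fin]
end

section
/- In the Faddeev-LeVerrier recursion N₁ = I, N_{k+1} = A·N_k − (1/k)·tr(A·N_k)·I, the terminal matrix satisfies N_{n+1} = 0, and N_n = (−1)^{n+1}·adj(A). -/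
open Matrix Polynomial

open PaperPf

namespace FLaux
open Matrix Polynomial
variable {R : Type*} [CommRing R] {n : ℕ}

lemma derivative_finset_prod {ι : Type*} [DecidableEq ι] (s : Finset ι) (f : ι → R[X]) :
    derivative (∏ i ∈ s, f i) = ∑ i ∈ s, (∏ j ∈ s.erase i, f j) * derivative (f i) := by
  rw [Finset.prod_eq_multiset_prod, Polynomial.derivative_prod, Finset.sum_eq_multiset_sum]
  congr 1

lemma derivative_det (M : Matrix (Fin n) (Fin n) R[X]) :
    derivative M.det = ∑ i, (M.updateCol i fun j => derivative (M j i)).det := by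
  rw [Matrix.det_apply, map_sum]
  have key : ∀ σ : Equiv.Perm (Fin n),
      derivative (Equiv.Perm.sign σ • ∏ i, M (σ i) i) =
      ∑ i, (Equiv.Perm.sign σ : ℤ) • ((∏ j ∈ Finset.univ.erase i, M (σ j) j) * derivative (M (σ i) i)) := by
    intro σ
    rw [Units.smul_def, map_zsmul, derivative_finset_prod, Finset.smul_sum]
  rw [Finset.sum_congr rfl fun σ _ => key σ, Finset.sum_comm]
  refine Finset.sum_congr rfl fun i _ => ?_
  rw [Matrix.det_apply]
  refine Finset.sum_congr rfl fun σ _ => ?_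
  rw [Units.smul_def]
  congr 1
  rw [← Finset.mul_prod_erase Finset.univ _ (Finset.mem_univ i),
    show (M.updateCol i fun j => derivative (M j i)) (σ i) i = derivative (M (σ i) i) by
      simp [Matrix.updateCol_apply], mul_comm]
  refine congrArg _ (Finset.prod_congr rfl fun j hj => ?_)
  simp [Matrix.updateCol_apply, Finset.ne_of_mem_erase hj]

lemma trace_adjugate_charmatrix (A : Matrix (Fin n) (Fin n) R) :
    (adjugate (charmatrix A)).trace = derivative (A.charpoly) := by
  rw [Matrix.charpoly, Matrix.trace, derivative_det]
  refine (Finset.sum_congr rfl fun i _ => ?_).symm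
  have h1 : (fun j => derivative (charmatrix A j i)) = Pi.single i (1 : R[X]) := by
    funext j
    rcases eq_or_ne j i with rfl | h
    · simp [charmatrix_apply_eq]
    · simp [charmatrix_apply_ne _ _ _ h, Pi.single_eq_of_ne h]
  rw [h1, Matrix.diag_apply]
  calc ((charmatrix A).updateCol i (Pi.single i 1)).det
      = ((charmatrix A)ᵀ.updateRow i (Pi.single i 1)).det := by
        rw [Matrix.updateRow_transpose, Matrix.det_transpose]
    _ = adjugate (charmatrix A)ᵀ i i := (Matrix.adjugate_apply _ i i).symm
    _ = (adjugate (charmatrix A))ᵀ i i := by rw [Matrix.adjugate_transpose]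
    _ = adjugate (charmatrix A) i i := rfl

/-- The closed-form Faddeev–LeVerrier matrices, built from the coefficients of
the characteristic polynomial. -/
noncomputable def FM (A : Matrix (Fin n) (Fin n) R) (k : ℕ) : Matrix (Fin n) (Fin n) R :=
  ∑ i ∈ Finset.range (k + 1), A.charpoly.coeff (n - k + i) • A ^ i

lemma charpoly_coeff_card (A : Matrix (Fin n) (Fin n) R) : A.charpoly.coeff n = 1 := by
  nontriviality R
  have h := A.charpoly_monic
  rw [Polynomial.Monic] at h
  rw [← h, Polynomial.leadingCoeff, Matrix.charpoly_natDegree_eq_dim, Fintype.card_fin]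

lemma FM_zero (A : Matrix (Fin n) (Fin n) R) : FM A 0 = 1 := by
  simp [FM, charpoly_coeff_card]

lemma FM_succ (A : Matrix (Fin n) (Fin n) R) {k : ℕ} (hk : k < n) :
    FM A (k + 1) = A * FM A k + A.charpoly.coeff (n - (k + 1)) • 1 := by
  rw [FM, Finset.sum_range_succ']
  simp only [pow_zero, Nat.add_zero]
  congr 1
  rw [FM, Finset.mul_sum]
  refine Finset.sum_congr rfl fun i _ => ?_
  rw [show n - (k + 1) + (i + 1) = n - k + i by omega, pow_succ', mul_smul_comm]

lemma FM_card (A : Matrix (Fin n) (Fin n) R) : FM A n = 0 := by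
  nontriviality R
  have hd : A.charpoly.natDegree < n + 1 := by
    rw [Matrix.charpoly_natDegree_eq_dim, Fintype.card_fin]; omega
  have h := Matrix.aeval_self_charpoly A
  rw [Polynomial.aeval_eq_sum_range' hd] at h
  rw [FM, ← h]
  exact Finset.sum_congr rfl fun i _ => by rw [Nat.sub_self, Nat.zero_add]

/-- The candidate for the adjugate of the characteristic matrix. -/
noncomputable def CM (A : Matrix (Fin n) (Fin n) R) : Matrix (Fin n) (Fin n) R[X] :=
  ∑ j ∈ Finset.range n, (X : R[X]) ^ (n - 1 - j) • (FM A j).map C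

lemma map_smul_one (r : R) :
    ((r • 1 : Matrix (Fin n) (Fin n) R)).map C = C r • (1 : Matrix (Fin n) (Fin n) R[X]) := by
  ext i j
  simp [Matrix.map_apply, Matrix.one_apply, apply_ite C, mul_ite]

lemma charmatrix_mul_map (A M : Matrix (Fin n) (Fin n) R) :
    charmatrix A * M.map C = (X : R[X]) • M.map C - (A * M).map C := by
  rw [charmatrix, sub_mul, Matrix.map_mul]
  congr 1
  rw [Matrix.scalar_apply, ← Matrix.smul_eq_diagonal_mul]

lemma key (A : Matrix (Fin n) (Fin n) R) :
    charmatrix A * CM A = A.charpoly • (1 : Matrix (Fin n) (Fin n) R[X]) := by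
  nontriviality R
  set f : ℕ → Matrix (Fin n) (Fin n) R[X] :=
    fun j => (X : R[X]) ^ (n - j) • (FM A j).map C with hf
  have step : ∀ j ∈ Finset.range n,
      (X : R[X]) ^ (n - 1 - j) • (charmatrix A * (FM A j).map C) =
      (f j - f (j + 1)) + ((C (A.charpoly.coeff (n - 1 - j)) * X ^ (n - 1 - j)) •
        (1 : Matrix (Fin n) (Fin n) R[X])) := by
    intro j hj
    rw [Finset.mem_range] at hj
    have hsub : A * FM A j = FM A (j + 1) - A.charpoly.coeff (n - (j + 1)) • 1 := by
      rw [FM_succ A hj, add_sub_cancel_right]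
    rw [charmatrix_mul_map, hsub, hf]
    simp only
    rw [show n - (j + 1) = n - 1 - j from by omega]
    rw [Matrix.map_sub _ (map_sub C), map_smul_one, smul_sub, smul_sub, smul_smul, ← pow_succ,
      show n - 1 - j + 1 = n - j from by omega, smul_smul,
      mul_comm ((X : R[X]) ^ (n - 1 - j))]
    abel
  rw [CM, Finset.mul_sum]
  calc ∑ j ∈ Finset.range n, charmatrix A * ((X:R[X]) ^ (n - 1 - j) • (FM A j).map C)
      = ∑ j ∈ Finset.range n, (X:R[X]) ^ (n - 1 - j) • (charmatrix A * (FM A j).map C) := by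
        refine Finset.sum_congr rfl fun j _ => ?_
        rw [Matrix.mul_smul]
    _ = (∑ j ∈ Finset.range n, (f j - f (j + 1))) +
        (∑ j ∈ Finset.range n, C (A.charpoly.coeff (n - 1 - j)) * X ^ (n - 1 - j)) • 1 := by
        rw [Finset.sum_congr rfl step, Finset.sum_add_distrib, Finset.sum_smul]
    _ = A.charpoly • 1 := by
        rw [Finset.sum_range_sub']
        have hf0 : f 0 = (X : R[X]) ^ n • 1 := by
          simp only [hf, Nat.sub_zero, FM_zero]
          rw [Matrix.map_one C (map_zero C) (map_one C)]
        have hfn : f n = 0 := by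
          simp [hf, FM_card]
        have hT : (∑ j ∈ Finset.range n, C (A.charpoly.coeff (n - 1 - j)) * X ^ (n - 1 - j))
            = A.charpoly - X ^ n := by
          rw [Finset.sum_range_reflect (fun i => C (A.charpoly.coeff i) * X ^ i) n]
          have hd : A.charpoly.natDegree < n + 1 := by
            rw [Matrix.charpoly_natDegree_eq_dim, Fintype.card_fin]; omega
          have h2 := Polynomial.as_sum_range' _ _ hd
          rw [Finset.sum_range_succ] at h2
          simp only [← Polynomial.C_mul_X_pow_eq_monomial, charpoly_coeff_card,
            Polynomial.C_1, one_mul] at h2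
          rw [eq_sub_iff_add_eq, ← h2]
        rw [hf0, hfn, sub_zero, hT, sub_smul]
        abel

lemma CM_eq_adjugate (A : Matrix (Fin n) (Fin n) R) : CM A = adjugate (charmatrix A) := by
  have h1 : charmatrix A * CM A = charmatrix A * adjugate (charmatrix A) := by
    rw [key, Matrix.mul_adjugate]
    rfl
  have h2 := congrArg (fun M => adjugate (charmatrix A) * M) h1
  simp only [← Matrix.mul_assoc, Matrix.adjugate_mul] at h2
  refine Matrix.ext fun i j => ?_
  have h3 := congrFun (congrFun h2 i) j
  simp only [Matrix.smul_mul, Matrix.one_mul, Matrix.smul_apply, smul_eq_mul] at h3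
  exact (A.charpoly_monic.isRegular.left h3 :)

lemma trace_CM (A : Matrix (Fin n) (Fin n) R) :
    (CM A).trace = ∑ j ∈ Finset.range n, (X : R[X]) ^ (n - 1 - j) * C ((FM A j).trace) := by
  rw [CM, Matrix.trace_sum]
  refine Finset.sum_congr rfl fun j _ => ?_
  rw [Matrix.trace_smul, smul_eq_mul]
  congr 1
  simp [Matrix.trace, Matrix.map_apply, Matrix.diag_apply, map_sum]

lemma trace_FM (A : Matrix (Fin n) (Fin n) R) {j : ℕ} (hj : j < n) :
    (FM A j).trace = ((n - j : ℕ) : R) * A.charpoly.coeff (n - j) := by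
  have h := trace_adjugate_charmatrix A
  rw [← CM_eq_adjugate, trace_CM] at h
  have hc := congrArg (fun q => q.coeff (n - 1 - j)) h
  rw [Polynomial.finset_sum_coeff] at hc
  rw [Finset.sum_eq_single j (fun b hb hbj => by
        rw [mul_comm, Polynomial.coeff_C_mul_X_pow]
        rw [Finset.mem_range] at hb
        simp only [ite_eq_right_iff]
        intro hEq; omega)
      (fun hj' => absurd (Finset.mem_range.mpr hj) hj')] at hc
  rw [mul_comm, Polynomial.coeff_C_mul_X_pow, if_pos rfl] at hc
  rw [Polynomial.coeff_derivative] at hc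
  rw [hc, show n - 1 - j + 1 = n - j from by omega,
    show ((n - j : ℕ) : R) = ((n - 1 - j : ℕ) : R) + 1 by
      rw [show n - j = (n - 1 - j) + 1 from by omega]; push_cast; ring]
  ring

lemma trace_A_mul_FM (A : Matrix (Fin n) (Fin n) R) {k : ℕ} (hk : k < n) :
    (A * FM A k).trace = -(((k + 1 : ℕ) : R) * A.charpoly.coeff (n - (k + 1))) := by
  have hsub : A * FM A k = FM A (k + 1) - A.charpoly.coeff (n - (k + 1)) • 1 := by
    rw [FM_succ A hk, add_sub_cancel_right]
  rw [hsub, Matrix.trace_sub, Matrix.trace_smul, Matrix.trace_one, smul_eq_mul]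
  by_cases heq : k + 1 = n
  · have h0 : FM A (k + 1) = 0 := by rw [heq]; exact FM_card A
    rw [h0, Matrix.trace_zero, Fintype.card_fin,
      show ((n : ℕ) : R) = ((k + 1 : ℕ) : R) from by rw [heq]]
    ring
  · have hlt : k + 1 < n := by omega
    rw [trace_FM A hlt, Fintype.card_fin]
    have : ((n - (k + 1) : ℕ) : R) = (n : R) - ((k + 1 : ℕ) : R) := by
      rw [Nat.cast_sub (by omega)]
    rw [this]
    push_cast
    ring

lemma eval_charmatrix (A : Matrix (Fin n) (Fin n) R) :
    (Polynomial.evalRingHom (0 : R)).mapMatrix (charmatrix A) = -A := by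
  refine Matrix.ext fun i j => ?_
  rcases eq_or_ne i j with rfl | h
  · simp [charmatrix_apply_eq]
  · simp [charmatrix_apply_ne _ _ _ h]

lemma FM_pred (A : Matrix (Fin n) (Fin n) R) (hn : 0 < n) :
    FM A (n - 1) = ((-1 : R) ^ (n + 1)) • A.adjugate := by
  have h := congrArg ((Polynomial.evalRingHom (0 : R)).mapMatrix) (CM_eq_adjugate A)
  rw [RingHom.map_adjugate, eval_charmatrix] at h
  have hL : (Polynomial.evalRingHom (0 : R)).mapMatrix (CM A) = FM A (n - 1) := by
    rw [CM, RingHom.mapMatrix_apply]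
    rw [show ((∑ j ∈ Finset.range n, (X : R[X]) ^ (n - 1 - j) • (FM A j).map C).map
        (Polynomial.evalRingHom (0 : R)) : Matrix (Fin n) (Fin n) R)
      = ∑ j ∈ Finset.range n, ((X : R[X]) ^ (n - 1 - j)).eval 0 • FM A j from by
        refine Matrix.ext fun i j => ?_
        simp only [Matrix.map_apply, Matrix.sum_apply, Matrix.smul_apply, smul_eq_mul,
          Polynomial.eval_finset_sum, Polynomial.eval_mul, Polynomial.eval_pow,
          Polynomial.eval_X, Polynomial.eval_C, coe_evalRingHom]]
    rw [Finset.sum_eq_single (n - 1) (fun b hb hbn => by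
        rw [Finset.mem_range] at hb
        rw [Polynomial.eval_pow, Polynomial.eval_X, zero_pow (by omega), zero_smul])
      (fun h' => absurd (Finset.mem_range.mpr (by omega)) h')]
    rw [Nat.sub_self, pow_zero, Polynomial.eval_one, one_smul]
  rw [hL] at h
  rw [h, show (-A) = (-1 : R) • A from by simp, Matrix.adjugate_smul, Fintype.card_fin,
    show ((-1 : R) ^ (n - 1)) = (-1 : R) ^ (n + 1) from by
      rw [show n + 1 = (n - 1) + 2 from by omega, pow_add]
      ring]

lemma FLN_eq_FM {R : Type*} [CommRing R] [Algebra ℚ R] {n : ℕ}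
    (A : Matrix (Fin n) (Fin n) R) {k : ℕ} (hk : k ≤ n) :
    PaperPf.FLN A k = FM A k := by
  induction k with
  | zero => rw [PaperPf.FLN, FM_zero]
  | succ k ih =>
    have hkn : k < n := by omega
    rw [PaperPf.FLN, ih (le_of_lt hkn), trace_A_mul_FM A hkn, FM_succ A hkn]
    rw [sub_eq_add_neg, ← neg_smul]
    congr 1
    rw [smul_neg, neg_neg]
    rw [show ((k + 1 : ℕ) : R) * A.charpoly.coeff (n - (k + 1))
        = ((k + 1 : ℕ) : ℚ) • A.charpoly.coeff (n - (k + 1)) from by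
      rw [Algebra.smul_def, map_natCast]]
    rw [smul_smul, inv_mul_cancel₀ (by exact_mod_cast Nat.succ_ne_zero k), one_smul]

end FLaux


/-- In the Faddeev–LeVerrier recursion `N₁ = I`,
`N_{k+1} = A·N_k − (1/k)·tr(A·N_k)·I` (so `N_k = FLN A (k-1)`), the terminal
matrix satisfies `N_{n+1} = 0`, and `N_n = (−1)^{n+1}·adj(A)`. -/
theorem faddeev_leverrier_terminal {R : Type*} [CommRing R] [Algebra ℚ R]
    {n : ℕ} (hn : 0 < n) (A : Matrix (Fin n) (Fin n) R) :
    FLN A n = 0 ∧ FLN A (n - 1) = ((-1 : R) ^ (n + 1)) • A.adjugate := ⟨by rw [FLaux.FLN_eq_FM A le_rfl, FLaux.FM_card],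
   by rw [FLaux.FLN_eq_FM A (by omega), FLaux.FM_pred A hn]⟩
end
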